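/- arXiv:1609.05854 — 2 statements merged into one kernel-verified Lean document; each statement's English description precedes it below -/
import Mathlib

section
/- If G is a graph with exactly k isolated vertices, then B(G) ≤ Z(L(G)) + k. -/
open scoped BigOperators

namespace Paper

variable {V : Type*}

/-- The zero-forcing closure: vertices that eventually become black starting from `S`. -/
inductive ZFClosure (G : SimpleGraph V) (S : Set V) : V → Prop
  | init {v : V} : v ∈ S → ZFClosure G S v
  | force {v w : V} : ZFClosure G S v → G.Adj v w →
      (∀ u, G.Adj v u → u ≠ w → ZFClosure G S u) → ZFClosure G S w

/-- `S` is a zero-forcing set of `G`. -/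
def IsZeroForcingSet (G : SimpleGraph V) (S : Set V) : Prop :=
  ∀ v : V, ZFClosure G S v

/-- The zero-forcing number `Z(G)`. -/
noncomputable def zfNumber (G : SimpleGraph V) : ℕ :=
  sInf {n | ∃ S : Set V, IsZeroForcingSet G S ∧ S.ncard = n}

/-- A state of the brushing process: the set of vertices that have fired (and hence
are clean), the set of dirty edges, and the number of brushes at each vertex. -/
structure BrushConfig (V : Type*) where
  fired : Set V
  dirty : Set (Sym2 V)
  brushes : V → ℕ

open Classical in
def BrushStep (G : SimpleGraph V) (restricted : Bool) (c c' : BrushConfig V) : Prop :=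
  ∃ (v : V) (f : Sym2 V → ℕ),
    v ∉ c.fired ∧
    (∀ e ∈ c.dirty, v ∈ e → if restricted then f e = 1 else 1 ≤ f e) ∧
    (∑ᶠ e ∈ {e ∈ c.dirty | v ∈ e}, f e) ≤ c.brushes v ∧
    c'.fired = insert v c.fired ∧
    c'.dirty = {e ∈ c.dirty | v ∉ e} ∧
    ∀ w : V, c'.brushes w =
      (if w = v then 0 else c.brushes w) + c.dirty.indicator f s(v, w)

/-- The initial brush configuration `ω` cleans the graph `G`:  starting with every vertex
and every edge dirty, some sequence of firings results in every vertex having fired. -/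
def Cleans (G : SimpleGraph V) (restricted : Bool) (ω : V → ℕ) : Prop :=
  ∃ c : BrushConfig V,
    Relation.ReflTransGen (BrushStep G restricted) ⟨∅, G.edgeSet, ω⟩ c ∧
    c.fired = Set.univ

/-- The brushing number `B(G)` (several brushes may traverse a single edge). -/
noncomputable def brushNumber (G : SimpleGraph V) : ℕ :=
  sInf {n | ∃ ω : V → ℕ, Cleans G false ω ∧ ∑ᶠ v, ω v = n}

/-- The restricted brushing number `b(G)` (each edge is traversed by exactly one brush). -/
noncomputable def brushNumber' (G : SimpleGraph V) : ℕ :=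
  sInf {n | ∃ ω : V → ℕ, Cleans G true ω ∧ ∑ᶠ v, ω v = n}

/-! Fire the vertices of `G` in the order of an injective rank `κ`: a vertex needs one brush per
higher neighbour and receives one from each lower neighbour, so `#higher - #lower` (truncated)
brushes at each vertex clean `G`. Given a zero forcing set `S` of `L(G)` whose first force is
`s(p, x) → s(p, q)`, every edge at `x` and every edge at `p` but `s(p, q)` is in `S`; ranking `x`,
then `p`, then the vertices in the rank obtained recursively for `S ∪ {s(p, q)}`, every vertex has
at most one higher edge outside `S`, and only if it has a lower neighbour. Counting each edge of
`S` at its lower endpoint bounds the total number of brushes by `|S|`. -/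

namespace ZFClosure

variable {W : Type*} {H : SimpleGraph W} {S T : Set W}

theorem mono (hST : S ⊆ T) {v : W} (h : ZFClosure H S v) : ZFClosure H T v := by
  induction h with
  | init hv => exact .init (hST hv)
  | force _ hadj _ ih ihs => exact .force ih hadj ihs

theorem mem_of_forall_forces_mem
    (hS : ∀ e ∈ S, ∀ w, H.Adj e w → (∀ u, H.Adj e u → u ≠ w → u ∈ S) → w ∈ S)
    {v : W} (h : ZFClosure H S v) : v ∈ S := by
  induction h with
  | init hv => exact hv
  | force _ hadj _ ih ihs => exact hS _ ih _ hadj ihs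

end ZFClosure

theorem IsZeroForcingSet.exists_force {W : Type*} {H : SimpleGraph W} {S : Set W}
    (hS : IsZeroForcingSet H S) (hne : S ≠ Set.univ) :
    ∃ e ∈ S, ∃ w ∉ S, H.Adj e w ∧ ∀ u, H.Adj e u → u ≠ w → u ∈ S := by
  by_contra! hstuck
  obtain ⟨w, hw⟩ := (Set.ne_univ_iff_exists_notMem S).mp hne
  refine hw (ZFClosure.mem_of_forall_forces_mem (fun e he w hadj hforce => ?_) (hS w))
  by_contra hwS
  obtain ⟨u, hu, huw, huS⟩ := hstuck e he w hwS hadj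
  exact huS (hforce u hu huw)

open Finset

section Brushing

variable [DecidableEq V] (G : SimpleGraph V) [DecidableRel G.Adj]

def firedConfig (ω : V → ℕ) (A : Finset V) : BrushConfig V where
  fired := A
  dirty := {e ∈ G.edgeSet | ∀ v ∈ e, v ∉ A}
  brushes w := if w ∈ A then 0 else ω w + #{u ∈ A | G.Adj w u}

theorem firedConfig_empty (ω : V → ℕ) : firedConfig G ω ∅ = ⟨∅, G.edgeSet, ω⟩ := by
  simp [firedConfig]

variable [Fintype V] {G}

theorem dirty_firedConfig_incident_eq_image {ω : V → ℕ} {A : Finset V} {v : V} (hv : v ∉ A) :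
    {e ∈ (firedConfig G ω A).dirty | v ∈ e} =
      (({w | G.Adj v w ∧ w ∉ A} : Finset V).image (s(v, ·)) : Set (Sym2 V)) := by
  ext e
  induction e using Sym2.ind with
  | _ x y =>
    simp only [firedConfig, Set.mem_ofPred_eq, SimpleGraph.mem_edgeSet, Sym2.mem_iff,
      forall_eq_or_imp, forall_eq, coe_image, coe_filter, mem_univ, true_and, Set.mem_image,
      Sym2.eq, Sym2.rel_iff', Prod.mk.injEq, Prod.swap_prod_mk]
    grind [SimpleGraph.Adj.symm]

theorem brushStep_firedConfig_insert {ω : V → ℕ} {A : Finset V} {v : V} (hv : v ∉ A)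
    (hbudget : #{w | G.Adj v w ∧ w ∉ A} ≤ ω v + #{u ∈ A | G.Adj v u}) :
    BrushStep G false (firedConfig G ω A) (firedConfig G ω (insert v A)) := by
  refine ⟨v, fun _ => 1, hv, fun _ _ _ => le_rfl, ?_, by simp [firedConfig], ?_, fun w => ?_⟩
  · rw [dirty_firedConfig_incident_eq_image hv, finsum_mem_coe_finset, sum_const, smul_eq_mul,
      mul_one, card_image_of_injective _ (fun _ _ => Sym2.congr_right.mp)]
    simpa [firedConfig, hv] using hbudget
  · ext e
    simp only [firedConfig, coe_insert, mem_insert, not_or, Set.mem_ofPred_eq]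
    grind
  · simp only [firedConfig, Set.indicator_apply, Set.mem_ofPred_eq, SimpleGraph.mem_edgeSet,
      Sym2.mem_iff, forall_eq_or_imp, forall_eq, mem_insert, filter_insert]
    by_cases hwv : w = v
    · simp [hwv]
    by_cases hwA : w ∈ A
    · simp [hwv, hwA]
    by_cases hadj : G.Adj v w
    · simp [hwv, hwA, hadj, hadj.symm, hv, add_assoc]
    · simp [hwv, hwA, hadj, G.adj_comm w v]

theorem cleans_of_rank {κ : V → ℕ} (hκ : Function.Injective κ) {ω : V → ℕ}
    (hω : ∀ v, #{w | G.Adj v w ∧ κ v < κ w} ≤ ω v + #{w | G.Adj v w ∧ κ w < κ v}) :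
    Cleans G false ω := by
  let below (t : ℕ) : Finset V := {v | κ v < t}
  have hreach : ∀ t, Relation.ReflTransGen (BrushStep G false)
      (firedConfig G ω ∅) (firedConfig G ω (below t)) := by
    intro t
    induction t with
    | zero => simpa [below] using .refl
    | succ t ih =>
      by_cases ht : ∃ v, κ v = t
      · obtain ⟨v, rfl⟩ := ht
        have hbelow : below (κ v + 1) = insert v (below (κ v)) := by
          ext u
          simp only [below, mem_filter, mem_univ, true_and, mem_insert]
          grind [hκ.eq_iff]
        rw [hbelow]
        have hup : ({w | G.Adj v w ∧ w ∉ below (κ v)} : Finset V) =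
            ({w | G.Adj v w ∧ κ v < κ w} : Finset V) :=
          filter_congr fun w _ => and_congr_right fun hadj => by
            simpa [below] using (hκ.ne (G.ne_of_adj hadj)).le_iff_lt
        have hdown : ({u ∈ below (κ v) | G.Adj v u} : Finset V) =
            ({w | G.Adj v w ∧ κ w < κ v} : Finset V) := by
          simp only [below, filter_filter, and_comm]
        refine ih.tail (brushStep_firedConfig_insert (by simp [below]) ?_)
        rw [hup, hdown]
        exact hω v
      · have hbelow : below (t + 1) = below t := by
          ext u
          simp only [below, mem_filter, mem_univ, true_and]
          grind
        rwa [hbelow]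
  obtain ⟨N, hN⟩ : ∃ N, ∀ v, κ v < N :=
    ⟨univ.sup κ + 1, fun v => Nat.lt_succ_of_le (le_sup (mem_univ v))⟩
  refine ⟨_, firedConfig_empty G ω ▸ hreach N, ?_⟩
  simp [firedConfig, below, hN]

end Brushing

section Rank

variable (G : SimpleGraph V)

def IsForcingRank (B : Set (Sym2 V)) (κ : V → ℕ) : Prop :=
  ∀ v w, G.Adj v w → κ v < κ w → s(v, w) ∉ B →
    (∃ u, G.Adj v u ∧ κ u < κ v) ∧ ∀ w', G.Adj v w' → κ v < κ w' → s(v, w') ∉ B → w' = w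

variable {G} [DecidableEq V]

def prependRank (x p : V) (κ : V → ℕ) (v : V) : ℕ :=
  if v = x then 0 else if v = p then 1 else κ v + 2

theorem prependRank_injective {x p : V} {κ : V → ℕ}
    (hκ : Function.Injective κ) : Function.Injective (prependRank x p κ) := by
  intro a b h
  unfold prependRank at h
  split_ifs at h <;> grind [hκ.eq_iff]

theorem IsForcingRank.prependRank_of_insert {B : Set (Sym2 V)} {κ : V → ℕ} {x p q : V}
    (hxp : G.Adj x p) (hx : ∀ y, G.Adj x y → s(x, y) ∈ B)
    (hp : ∀ y, G.Adj p y → y ≠ q → s(p, y) ∈ B) (hκ : IsForcingRank G (insert s(p, q) B) κ) :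
    IsForcingRank G B (prependRank x p κ) := by
  intro v w hvw hlt hvwB
  by_cases hvx : v = x
  · exact absurd (hvx ▸ hx w (hvx ▸ hvw)) hvwB
  by_cases hvp : v = p
  · subst hvp
    have hq : ∀ w', G.Adj v w' → s(v, w') ∉ B → w' = q := fun w' h h' => by
      by_contra hne; exact h' (hp w' h hne)
    refine ⟨⟨x, hxp.symm, by simp [Paper.prependRank, hvx]⟩,
      fun w' h _ h' => (hq w' h h').trans (hq w hvw hvwB).symm⟩
  have habove : ∀ u, prependRank x p κ v < prependRank x p κ u → u ≠ p ∧ κ v < κ u := by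
    intro u hu
    unfold Paper.prependRank at hu
    split_ifs at hu <;> grind
  have hbelow : ∀ u, κ u < κ v → prependRank x p κ u < prependRank x p κ v := by
    intro u hu
    unfold Paper.prependRank
    split_ifs <;> omega
  have hforced : ∀ u, u ≠ p → s(v, u) ∉ B → s(v, u) ∉ insert s(p, q) B := by
    rintro u hup hvuB (h | h)
    · rcases Sym2.eq_iff.mp h with ⟨hvp', -⟩ | ⟨-, hup'⟩
      exacts [hvp hvp', hup hup']
    · exact hvuB h
  obtain ⟨hwp, hκvw⟩ := habove w hlt
  obtain ⟨⟨u, hu, hκu⟩, huniq⟩ := hκ v w hvw hκvw (hforced w hwp hvwB)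
  refine ⟨⟨u, hu, hbelow u hκu⟩, fun w' h hl h' => ?_⟩
  obtain ⟨hw'p, hκvw'⟩ := habove w' hl
  exact huniq w' h hκvw' (hforced w' hw'p h')

theorem exists_of_lineGraph_force {S : Set G.edgeSet} {e w : G.edgeSet} (he : e ∈ S)
    (hadj : G.lineGraph.Adj e w) (hforce : ∀ u, G.lineGraph.Adj e u → u ≠ w → u ∈ S) :
    ∃ x p q, (w : Sym2 V) = s(p, q) ∧ G.Adj x p ∧
      (∀ y, G.Adj x y → s(x, y) ∈ Subtype.val '' S) ∧
      (∀ y, G.Adj p y → y ≠ q → s(p, y) ∈ Subtype.val '' S) := by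
  obtain ⟨hew, p, hpe, hpw⟩ := SimpleGraph.lineGraph_adj_iff_exists.mp hadj
  obtain ⟨x, hex⟩ := Sym2.mem_iff_exists.mp hpe
  obtain ⟨q, hwq⟩ := Sym2.mem_iff_exists.mp hpw
  have hpx : G.Adj p x := G.mem_edgeSet.mp (hex ▸ e.2)
  have hblack : ∀ g (hg : g ∈ G.edgeSet), (∃ z ∈ (e : Sym2 V), z ∈ g) → g ≠ w →
      g ∈ Subtype.val '' S := by
    intro g hg ⟨z, hze, hzg⟩ hgw
    by_cases hge : g = e
    · exact ⟨e, he, hge.symm⟩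
    refine ⟨⟨g, hg⟩, hforce _ ?_ fun h => hgw (congrArg Subtype.val h), rfl⟩
    exact SimpleGraph.lineGraph_adj_iff_exists.mpr
      ⟨fun h => hge (congrArg Subtype.val h).symm, z, hze, hzg⟩
  refine ⟨x, p, q, hwq, hpx.symm, fun y hxy => ?_, fun y hpy hyq => ?_⟩
  · refine hblack _ hxy ⟨x, by simp [hex], Sym2.mem_mk_left x y⟩ fun h => hew (Subtype.ext ?_)
    rw [hwq] at h
    rcases Sym2.eq_iff.mp h with ⟨rfl, -⟩ | ⟨rfl, -⟩
    · exact absurd hpx G.irrefl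
    · rw [hex, hwq]
  · refine hblack _ hpy ⟨p, hpe, Sym2.mem_mk_left p y⟩ fun h => hyq ?_
    rw [hwq] at h
    exact Sym2.congr_right.mp h

end Rank

theorem IsZeroForcingSet.exists_isForcingRank [Fintype V] [DecidableEq V] {G : SimpleGraph V}
    {S : Set G.edgeSet} (hS : IsZeroForcingSet G.lineGraph S) :
    ∃ κ : V → ℕ, Function.Injective κ ∧ IsForcingRank G (Subtype.val '' S) κ := by
  have : Finite G.edgeSet := Subtype.finite
  by_cases hSu : S = Set.univ
  · refine ⟨fun v => Fintype.equivFin V v, fun _ _ h => (Fintype.equivFin V).injective (Fin.ext h),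
      fun v w hvw _ hS => absurd ⟨⟨s(v, w), hvw⟩, hSu ▸ trivial, rfl⟩ hS⟩
  obtain ⟨e, he, w, hw, hadj, hforce⟩ := hS.exists_force hSu
  obtain ⟨x, p, q, hwpq, hxp, hx, hp⟩ := exists_of_lineGraph_force he hadj hforce
  obtain ⟨κ, hκ, hrank⟩ :=
    IsZeroForcingSet.exists_isForcingRank (S := insert w S)
      fun v => (hS v).mono (Set.subset_insert w S)
  rw [Set.image_insert_eq, hwpq] at hrank
  exact ⟨prependRank x p κ, prependRank_injective hκ, hrank.prependRank_of_insert hxp hx hp⟩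
termination_by Sᶜ.ncard
decreasing_by
  exact Set.ncard_lt_ncard (compl_lt_compl_iff_lt.mpr (Set.ssubset_insert hw)) (Set.toFinite _)

section Counting

variable [Fintype V] {G : SimpleGraph V} [DecidableRel G.Adj]

theorem sum_card_upper_mem_le_ncard [DecidableEq V] (κ : V → ℕ) (B : Set (Sym2 V))
    [DecidablePred (· ∈ B)] :
    ∑ v, #{w | κ v < κ w ∧ s(v, w) ∈ B} ≤ B.ncard := by
  rw [← card_sigma, Set.ncard_eq_toFinset_card']
  refine card_le_card_of_injOn (fun vw => s(vw.1, vw.2))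
    (fun vw hvw => Set.mem_toFinset.mpr (mem_filter.mp (mem_sigma.mp hvw).2).2.2) ?_
  rintro ⟨a, b⟩ hab ⟨c, d⟩ hcd h
  have hκab : κ a < κ b := (mem_filter.mp (mem_sigma.mp hab).2).2.1
  have hκcd : κ c < κ d := (mem_filter.mp (mem_sigma.mp hcd).2).2.1
  rcases Sym2.eq_iff.mp h with ⟨rfl, rfl⟩ | ⟨hac : a = d, hbd : b = c⟩
  · rfl
  · subst hac hbd
    omega

theorem IsForcingRank.card_upper_le {B : Set (Sym2 V)} [DecidablePred (· ∈ B)] {κ : V → ℕ}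
    (h : IsForcingRank G B κ) (v : V) :
    #{w | G.Adj v w ∧ κ v < κ w} ≤
      #{w | κ v < κ w ∧ s(v, w) ∈ B} + #{w | G.Adj v w ∧ κ w < κ v} := by
  have hsplit := card_filter_add_card_filter_not (s := {w | G.Adj v w ∧ κ v < κ w})
    (fun w => s(v, w) ∈ B)
  have hblack : #{w ∈ {w | G.Adj v w ∧ κ v < κ w} | s(v, w) ∈ B} ≤
      #{w | κ v < κ w ∧ s(v, w) ∈ B} :=
    card_le_card fun w => by
      simp +contextual only [mem_filter, mem_univ, true_and, and_self, implies_true]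
  have hwhite : #{w ∈ {w | G.Adj v w ∧ κ v < κ w} | s(v, w) ∉ B} ≤ 1 :=
    card_le_one.mpr fun a ha b hb => by
      simp only [mem_filter, mem_univ, true_and] at ha hb
      exact (h v b hb.1.1 hb.1.2 hb.2).2 a ha.1.1 ha.1.2 ha.2
  have hlower : 0 < #{w ∈ {w | G.Adj v w ∧ κ v < κ w} | s(v, w) ∉ B} →
      0 < #{w | G.Adj v w ∧ κ w < κ v} := fun hpos => by
    obtain ⟨w, hw⟩ := card_pos.mp hpos
    simp only [mem_filter, mem_univ, true_and] at hw
    obtain ⟨u, hu, hκu⟩ := (h v w hw.1.1 hw.1.2 hw.2).1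
    exact card_pos.mpr ⟨u, by simp [hu, hκu]⟩
  omega

theorem IsForcingRank.sum_sub_le_ncard [DecidableEq V] {B : Set (Sym2 V)} [DecidablePred (· ∈ B)]
    {κ : V → ℕ} (h : IsForcingRank G B κ) :
    ∑ v, (#{w | G.Adj v w ∧ κ v < κ w} - #{w | G.Adj v w ∧ κ w < κ v}) ≤ B.ncard :=
  (sum_le_sum fun v _ => tsub_le_iff_right.mpr (h.card_upper_le v)).trans
    (sum_card_upper_mem_le_ncard κ B)

end Counting

theorem brushNumber_le_zfNumber_lineGraph [Fintype V] (G : SimpleGraph V) :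
    brushNumber G ≤ zfNumber G.lineGraph := by
  classical
  obtain ⟨S, hS, hcard⟩ : ∃ S : Set G.edgeSet,
      IsZeroForcingSet G.lineGraph S ∧ S.ncard = zfNumber G.lineGraph :=
    Nat.sInf_mem (s := {n | ∃ S : Set G.edgeSet, IsZeroForcingSet G.lineGraph S ∧ S.ncard = n})
      ⟨_, Set.univ, fun _ => .init trivial, rfl⟩
  obtain ⟨κ, hκ, hrank⟩ := hS.exists_isForcingRank
  let ω v := #{w | G.Adj v w ∧ κ v < κ w} - #{w | G.Adj v w ∧ κ w < κ v}
  calc brushNumber G ≤ ∑ᶠ v, ω v :=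
        Nat.sInf_le ⟨ω, cleans_of_rank hκ fun _ => le_tsub_add, rfl⟩
    _ = ∑ v, ω v := finsum_eq_sum_of_fintype ω
    _ ≤ (Subtype.val '' S).ncard := hrank.sum_sub_le_ncard
    _ = zfNumber G.lineGraph := by rw [Set.ncard_image_of_injective _ Subtype.val_injective, hcard]

theorem brushNumber_le_zfNumber_lineGraph_add_isolated_general {V : Type*} [Fintype V]
    (G : SimpleGraph V) (k : ℕ) :
    brushNumber G ≤ zfNumber G.lineGraph + k :=
  (brushNumber_le_zfNumber_lineGraph G).trans (Nat.le_add_right _ k)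

theorem brushNumber_le_zfNumber_lineGraph_add_isolated {V : Type*} [Fintype V]
    (G : SimpleGraph V) (k : ℕ) (hk : {v : V | ∀ w, ¬ G.Adj v w}.ncard = k) :
    brushNumber G ≤ zfNumber G.lineGraph + k :=
  brushNumber_le_zfNumber_lineGraph_add_isolated_general G k

end Paper
end

section
/- For n ≥ 3, the brushing number of the star K_{1,n} equals ⌈n/2⌉. -/
open scoped BigOperators

namespace Paper

variable {V : Type*}

/-- The star `K_{1,n}`: vertex `0` is the centre, adjacent to the `n` leaves. -/
def starGraph (n : ℕ) : SimpleGraph (Fin (n + 1)) where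
  Adj i j := i ≠ j ∧ (i = 0 ∨ j = 0)
  symm := ⟨by rintro i j ⟨h, hc⟩; exact ⟨h.symm, hc.symm⟩⟩
  loopless := ⟨by rintro i ⟨h, _⟩; exact h rfl⟩


/-
Upper bound: put one brush on each of the first `m = ⌈n/2⌉` leaves. They fire first, each sending
its brush to the centre, which then holds `m ≥ n - m` brushes: enough for its `n - m` dirty edges.

Lower bound: look at the moment the centre fires, after a set `F` of leaves. Each leaf of `F` fired
while its only edge was dirty and before it could receive anything, so it started with a brush:
`|F| ≤ Σ ω`. The centre needs a brush for each of its `n - |F|` dirty edges, and brushes are never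
created, so `n - |F| ≤ Σ ω`. Hence `n ≤ 2 Σ ω`.
-/

lemma ncard_le_finsum {α : Type*} {s : Set α} {f : α → ℕ} (hf : (Function.support f).Finite)
    (h : ∀ a ∈ s, 1 ≤ f a) : s.ncard ≤ ∑ᶠ a, f a := by
  have hle : s.indicator 1 ≤ f := fun a => by
    by_cases ha : a ∈ s <;> simp [ha, h a]
  rw [← finsum_one, finsum_mem_def]
  refine finsum_le_finsum' (hf.subset fun a ha => ?_) hf hle
  exact fun h0 => ha (Nat.le_zero.mp (h0 ▸ hle a))

lemma finsum_indicator_mk_left {α M : Type*} [AddCommMonoid M] (s : Set (Sym2 α))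
    (f : Sym2 α → M) (v : α) :
    ∑ᶠ w, s.indicator f s(v, w) = ∑ᶠ e ∈ {e ∈ s | v ∈ e}, f e := by
  have hrange : Set.range (fun w => s(v, w)) = {e | v ∈ e} := by
    ext e
    simp [Sym2.mem_iff_exists, eq_comm]
  rw [← Set.inter_ofPred_eq_sep, ← hrange, ← Set.image_preimage_eq_inter_range,
    finsum_mem_image (fun _ _ _ _ h => Sym2.congr_right.mp h), finsum_mem_def]
  rfl

lemma ncard_incident_edgeSet_inter_sym2 (G : SimpleGraph V) {S : Set V} {v : V} (hv : v ∉ S) :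
    {e ∈ G.edgeSet ∩ Sᶜ.sym2 | v ∈ e}.ncard = (G.neighborSet v \ S).ncard := by
  have himage :
      {e ∈ G.edgeSet ∩ Sᶜ.sym2 | v ∈ e} = (fun w => s(v, w)) '' (G.neighborSet v \ S) := by
    ext e
    induction e using Sym2.ind
    simp only [Set.mem_inter_iff, Set.sep_inter, Set.mem_ofPred_eq, SimpleGraph.mem_edgeSet,
      Sym2.mem_iff, Set.mk_mem_sym2_iff, Set.mem_compl_iff, Set.mem_image, Set.mem_sdiff,
      SimpleGraph.mem_neighborSet, Sym2.eq, Sym2.rel_iff', Prod.mk.injEq, Prod.swap_prod_mk]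
    constructor
    · rintro ⟨⟨hadj, -⟩, ⟨hx, hy⟩, rfl | rfl⟩
      · exact ⟨_, ⟨hadj, hy⟩, .inl ⟨rfl, rfl⟩⟩
      · exact ⟨_, ⟨hadj.symm, hx⟩, .inr ⟨rfl, rfl⟩⟩
    · rintro ⟨u, ⟨hadj, hu⟩, ⟨rfl, rfl⟩ | ⟨rfl, rfl⟩⟩
      · exact ⟨⟨hadj, .inl rfl⟩, ⟨hv, hu⟩, .inl rfl⟩
      · exact ⟨⟨hadj.symm, .inr rfl⟩, ⟨hu, hv⟩, .inr rfl⟩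
  rw [himage, Set.ncard_image_of_injective _ fun _ _ h => Sym2.congr_right.mp h]

def BrushReachable (G : SimpleGraph V) (restricted : Bool) (ω : V → ℕ) (c : BrushConfig V) :
    Prop :=
  Relation.ReflTransGen (BrushStep G restricted) ⟨∅, G.edgeSet, ω⟩ c

section Brushing

variable {G : SimpleGraph V} {restricted : Bool} {ω : V → ℕ} {c : BrushConfig V}

namespace BrushReachable

theorem dirty_eq (hc : BrushReachable G restricted ω c) :
    c.dirty = G.edgeSet ∩ c.firedᶜ.sym2 := by
  induction hc with
  | refl => simp
  | tail _ hstep ih =>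
    obtain ⟨v, f, -, -, -, hfired, hdirty, -⟩ := hstep
    rw [hdirty, hfired, ih]
    ext e
    induction e using Sym2.ind
    simp only [Set.mem_ofPred_eq, Set.mem_inter_iff, Set.mk_mem_sym2_iff, Set.mem_compl_iff,
      Set.mem_insert_iff, Sym2.mem_iff]
    tauto

theorem brushes_eq_of_forall_adj_notMem (hc : BrushReachable G restricted ω c) {w : V}
    (hw : w ∉ c.fired) (hN : ∀ u, G.Adj w u → u ∉ c.fired) : c.brushes w = ω w := by
  induction hc with
  | refl => rfl
  | @tail b c hb hstep ih =>
    obtain ⟨v, f, -, -, -, hfired, -, hbrushes⟩ := hstep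
    rw [hfired] at hw hN
    have hwv : w ≠ v := fun h => hw (h ▸ Set.mem_insert w _)
    have hvw : s(v, w) ∉ b.dirty := fun h =>
      hN v ((dirty_eq hb ▸ h).1.symm) (Set.mem_insert v _)
    rw [hbrushes, if_neg hwv, Set.indicator_of_notMem hvw, add_zero]
    exact ih (fun h => hw (Set.mem_insert_of_mem v h))
      fun u hu h => hN u hu (Set.mem_insert_of_mem v h)

theorem exists_brushes_ge_of_mem_fired [Finite V] (hc : BrushReachable G restricted ω c)
    {v : V} (hv : v ∈ c.fired) :
    ∃ b, BrushReachable G restricted ω b ∧ b.fired ⊆ c.fired ∧ v ∉ b.fired ∧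
      (G.neighborSet v \ b.fired).ncard ≤ b.brushes v := by
  induction hc with
  | refl => exact absurd hv (Set.notMem_empty v)
  | @tail b c hb hstep ih =>
    obtain ⟨u, f, -, hf, hsum, hfired, -⟩ := hstep
    rw [hfired] at hv ⊢
    by_cases hvb : v ∈ b.fired
    · obtain ⟨b', hb', hsub, hvb', hle⟩ := ih hvb
      exact ⟨b', hb', hsub.trans (Set.subset_insert u _), hvb', hle⟩
    obtain rfl : v = u := (Set.mem_insert_iff.mp hv).resolve_right hvb
    refine ⟨b, hb, Set.subset_insert v _, hvb, ?_⟩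
    rw [← ncard_incident_edgeSet_inter_sym2 G hvb, ← dirty_eq hb]
    refine le_trans ?_ hsum
    rw [finsum_mem_def]
    refine ncard_le_finsum (Set.toFinite _) fun e he => ?_
    have := hf e he.1 he.2
    rw [Set.indicator_of_mem he]
    cases restricted <;> simp only [Bool.false_eq_true, ↓reduceIte] at this <;> omega

theorem one_le_of_mem_fired_of_forall_adj_notMem [Finite V]
    (hc : BrushReachable G restricted ω c) {v u : V} (hv : v ∈ c.fired) (hvu : G.Adj v u)
    (hN : ∀ x, G.Adj v x → x ∉ c.fired) : 1 ≤ ω v := by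
  obtain ⟨b, hb, hsub, hvb, hle⟩ := hc.exists_brushes_ge_of_mem_fired hv
  have hNb : ∀ x, G.Adj v x → x ∉ b.fired := fun x hx h => hN x hx (hsub h)
  have hu : u ∈ G.neighborSet v \ b.fired := ⟨hvu, hNb u hvu⟩
  rw [← brushes_eq_of_forall_adj_notMem hb hvb hNb]
  exact ((Set.ncard_pos (Set.toFinite _)).mpr ⟨u, hu⟩).trans_le hle

theorem finsum_brushes_le [Finite V] (hc : BrushReachable G restricted ω c) :
    ∑ᶠ w, c.brushes w ≤ ∑ᶠ w, ω w := by
  classical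
  induction hc with
  | refl => rfl
  | @tail b c _ hstep ih =>
    obtain ⟨v, f, -, -, hsum, -, -, hbrushes⟩ := hstep
    have hsplit :
        ∑ᶠ w, b.brushes w = ∑ᶠ w, (if w = v then 0 else b.brushes w) + b.brushes v := by
      have h (w : V) : b.brushes w =
          (if w = v then 0 else b.brushes w) + if w = v then b.brushes w else 0 := by
        split_ifs <;> simp
      rw [finsum_congr h, finsum_add_distrib (Set.toFinite _) (Set.toFinite _),
        finsum_eq_single _ v fun w hw => if_neg hw, if_pos rfl]
    calc ∑ᶠ w, c.brushes w
        = ∑ᶠ w, (if w = v then 0 else b.brushes w) + ∑ᶠ w, b.dirty.indicator f s(v, w) := by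
          rw [finsum_congr hbrushes, finsum_add_distrib (Set.toFinite _) (Set.toFinite _)]
      _ ≤ ∑ᶠ w, b.brushes w := by
          rw [finsum_indicator_mk_left, hsplit]
          exact Nat.add_le_add_left hsum _
      _ ≤ ∑ᶠ w, ω w := ih

end BrushReachable

open Classical in
/-- The configuration reached when the vertices of `S` have fired, each sending exactly one
brush along each of its dirty edges. -/
noncomputable def greedyConfig (G : SimpleGraph V) (ω : V → ℕ) (S : Set V) :
    BrushConfig V where
  fired := S
  dirty := G.edgeSet ∩ Sᶜ.sym2
  brushes w := if w ∈ S then 0 else ω w + (G.neighborSet w ∩ S).ncard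

lemma greedyConfig_empty (G : SimpleGraph V) (ω : V → ℕ) :
    greedyConfig G ω ∅ = ⟨∅, G.edgeSet, ω⟩ := by
  simp [greedyConfig]

lemma brushStep_greedyConfig [Finite V] {S : Set V} {v : V} (hv : v ∉ S)
    (h : (G.neighborSet v \ S).ncard ≤ ω v + (G.neighborSet v ∩ S).ncard) :
    BrushStep G restricted (greedyConfig G ω S) (greedyConfig G ω (insert v S)) := by
  classical
  refine ⟨v, fun _ => 1, hv, fun _ _ _ => by cases restricted <;> simp, ?_, rfl, ?_,
    fun w => ?_⟩
  · show ∑ᶠ e ∈ {e ∈ G.edgeSet ∩ Sᶜ.sym2 | v ∈ e}, 1 ≤ _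
    rw [finsum_one, ncard_incident_edgeSet_inter_sym2 G hv]
    simpa [greedyConfig, hv] using h
  · ext e
    induction e using Sym2.ind
    simp only [greedyConfig, Set.mem_inter_iff, Set.mk_mem_sym2_iff, Set.mem_compl_iff,
      Set.mem_insert_iff, Set.mem_ofPred_eq, Sym2.mem_iff]
    tauto
  by_cases hwv : w = v
  · subst hwv
    simp [greedyConfig]
  by_cases hwS : w ∈ S
  · simp [greedyConfig, hwS]
  by_cases hvw : G.Adj v w
  · have hcard : (G.neighborSet w ∩ insert v S).ncard = (G.neighborSet w ∩ S).ncard + 1 := by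
      rw [Set.inter_insert_of_mem (show v ∈ G.neighborSet w from hvw.symm),
        Set.ncard_insert_of_notMem fun h => hv h.2]
    simp [greedyConfig, hwS, hwv, hvw, hv, hcard, add_assoc]
  · have hN : G.neighborSet w ∩ insert v S = G.neighborSet w ∩ S :=
      Set.inter_insert_of_notMem fun h : v ∈ G.neighborSet w => hvw h.symm
    simp [greedyConfig, hwS, hwv, hvw, hN]

theorem cleans_of_injective_rank [Finite V] (rank : V → ℕ) (hrank : Function.Injective rank)
    (h : ∀ v, (G.neighborSet v \ {u | rank u < rank v}).ncard ≤
      ω v + (G.neighborSet v ∩ {u | rank u < rank v}).ncard) :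
    Cleans G restricted ω := by
  have hreach (k : ℕ) : BrushReachable G restricted ω (greedyConfig G ω {u | rank u < k}) := by
    induction k with
    | zero =>
      simp only [Nat.not_lt_zero, Set.ofPred_false, greedyConfig_empty]
      exact .refl
    | succ k ih =>
      by_cases hk : ∃ v, rank v = k
      · obtain ⟨v, rfl⟩ := hk
        have hset : {u | rank u < rank v + 1} = insert v {u | rank u < rank v} := by
          ext u
          simp [le_iff_eq_or_lt, hrank.eq_iff]
        rw [hset]
        exact ih.tail (brushStep_greedyConfig (lt_irrefl (rank v)) (h v))
      · have hset : {u | rank u < k + 1} = {u | rank u < k} := by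
          ext u
          have hu : rank u ≠ k := fun h => hk ⟨u, h⟩
          show rank u < k + 1 ↔ rank u < k
          omega
        rwa [hset]
  obtain ⟨K, hK⟩ := (Set.finite_range rank).bddAbove
  exact ⟨_, hreach (K + 1), Set.eq_univ_of_forall fun u => Nat.lt_succ_of_le (hK ⟨u, rfl⟩)⟩

end Brushing

lemma starGraph_neighborSet_zero (n : ℕ) : (starGraph n).neighborSet 0 = {0}ᶜ := by
  ext i
  simp [starGraph, eq_comm]

lemma starGraph_neighborSet_of_ne_zero {n : ℕ} {i : Fin (n + 1)} (hi : i ≠ 0) :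
    (starGraph n).neighborSet i = {0} := by
  ext j
  simp only [SimpleGraph.mem_neighborSet, starGraph, Set.mem_singleton_iff]
  constructor
  · rintro ⟨-, h | rfl⟩
    exacts [absurd h hi, rfl]
  · rintro rfl
    exact ⟨hi, .inr rfl⟩

theorem le_two_mul_finsum_of_cleans_starGraph {n : ℕ} {restricted : Bool}
    {ω : Fin (n + 1) → ℕ} (h : Cleans (starGraph n) restricted ω) : n ≤ 2 * ∑ᶠ i, ω i := by
  obtain ⟨c, hc, hfired⟩ := h
  obtain ⟨b, hb, -, h0, hdeg⟩ :=
    BrushReachable.exists_brushes_ge_of_mem_fired hc (hfired ▸ Set.mem_univ 0)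
  have hleaves : b.fired.ncard ≤ ∑ᶠ i, ω i := by
    refine ncard_le_finsum (Set.toFinite _) fun i hi => ?_
    have hN := starGraph_neighborSet_of_ne_zero (ne_of_mem_of_not_mem hi h0)
    refine hb.one_le_of_mem_fired_of_forall_adj_notMem hi
      (show 0 ∈ (starGraph n).neighborSet i by simp [hN]) fun x hx => ?_
    rw [← SimpleGraph.mem_neighborSet, hN] at hx
    rwa [Set.mem_singleton_iff.mp hx]
  have hcentre : n - b.fired.ncard ≤ ∑ᶠ i, ω i :=
    calc n - b.fired.ncard = ((starGraph n).neighborSet 0 \ b.fired).ncard := by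
          rw [starGraph_neighborSet_zero, Set.sdiff_eq, ← Set.compl_union, Set.ncard_compl,
            Set.singleton_union, Set.ncard_insert_of_notMem h0, Nat.card_eq_fintype_card,
            Fintype.card_fin]
          omega
      _ ≤ b.brushes 0 := hdeg
      _ ≤ ∑ᶠ i, b.brushes i := single_le_finsum 0 (Set.toFinite _) fun _ => Nat.zero_le _
      _ ≤ ∑ᶠ i, ω i := hb.finsum_brushes_le
  omega

def firstLeaves (n m : ℕ) : Set (Fin (n + 1)) := {i | i ≠ 0 ∧ (i : ℕ) ≤ m}

lemma ncard_firstLeaves {n m : ℕ} (hm : m ≤ n) : (firstLeaves n m).ncard = m := by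
  have h : firstLeaves n m = ↑(Finset.Ioc (0 : Fin (n + 1)) ⟨m, by omega⟩) := by
    ext i
    simp only [firstLeaves, Finset.coe_Ioc, Set.mem_Ioc, Set.mem_ofPred_eq, Fin.lt_def,
      Fin.le_def, ne_eq, Fin.ext_iff, Fin.val_zero]
    omega
  rw [h, Set.ncard_coe_finset, Fin.card_Ioc]
  rfl

lemma finsum_indicator_firstLeaves {n m : ℕ} (hm : m ≤ n) :
    ∑ᶠ i, (firstLeaves n m).indicator 1 i = m := by
  rw [← finsum_mem_def]
  simpa using ncard_firstLeaves hm

theorem cleans_starGraph_firstLeaves {n m : ℕ} (restricted : Bool) (hm : m ≤ n)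
    (hnm : n ≤ 2 * m) : Cleans (starGraph n) restricted ((firstLeaves n m).indicator 1) := by
  -- firing order: the leaves `1, …, m`, then the centre, then the other leaves
  set rank : Fin (n + 1) → ℕ := fun i => if i = 0 then 2 * m + 1 else 2 * i with hrank
  have hL : firstLeaves n m ⊆ {0}ᶜ := fun i hi => hi.1
  have hbefore0 : {u | rank u < rank 0} = firstLeaves n m := by
    ext u
    by_cases hu : u = 0 <;> simp [hrank, hu, firstLeaves]
  refine cleans_of_injective_rank rank ?_ fun v => ?_
  · intro i j hij
    simp only [hrank] at hij
    split_ifs at hij <;> omega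
  by_cases hv : v = 0
  · subst hv
    rw [hbefore0, starGraph_neighborSet_zero, Set.inter_eq_right.mpr hL, Set.ncard_sdiff hL,
      Set.ncard_compl, Set.ncard_singleton, Nat.card_eq_fintype_card, Fintype.card_fin,
      ncard_firstLeaves hm]
    omega
  rw [starGraph_neighborSet_of_ne_zero hv]
  by_cases hvm : (v : ℕ) ≤ m
  · rw [Set.indicator_of_mem (show v ∈ firstLeaves n m from ⟨hv, hvm⟩)]
    have := (Set.ncard_le_ncard (Set.sdiff_subset (s := {(0 : Fin (n + 1))})
      (t := {u | rank u < rank v}))).trans_eq (Set.ncard_singleton 0)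
    simp only [Pi.one_apply]
    omega
  · have h0v : (0 : Fin (n + 1)) ∈ {u | rank u < rank v} := by
      show rank 0 < rank v
      simp only [hrank, if_pos rfl, if_neg hv]
      omega
    rw [Set.sdiff_eq_empty.mpr (Set.singleton_subset_iff.mpr h0v), Set.ncard_empty]
    exact Nat.zero_le _

theorem brushNumber_starGraph_general (n : ℕ) :
    brushNumber (starGraph n) = (n + 1) / 2 := by
  have hcleans :=
    cleans_starGraph_firstLeaves (n := n) (m := (n + 1) / 2) false (by omega) (by omega)
  apply le_antisymm
  · exact Nat.sInf_le ⟨_, hcleans, finsum_indicator_firstLeaves (by omega)⟩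
  · refine le_csInf ⟨_, _, hcleans, rfl⟩ ?_
    rintro _ ⟨ω, hω, rfl⟩
    have := le_two_mul_finsum_of_cleans_starGraph hω
    omega

theorem brushNumber_starGraph (n : ℕ) (hn : 3 ≤ n) :
    brushNumber (starGraph n) = (n + 1) / 2 :=
  brushNumber_starGraph_general n

end Paper
end
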